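/- Let ⦀·⦀ be an orthant-monotonic norm on ℝ^d. Then the sequence of generalized k-support norms is nonincreasing in k and is decreasingly graded with respect to the ℓ0 pseudonorm: for every y ∈ ℝ^d and every l ∈ {0,…,d}, if ℓ0(y) ≤ l then ⦀y⦀^supp_l = ⦀y⦀^supp_d = ⦀y⦀⋆. If moreover the normed space (ℝ^d, ⦀·⦀⋆) is strictly convex, then the sequence is strictly decreasingly graded: for every y ∈ ℝ^d and every l ∈ {0,…,d}, ℓ0(y) ≤ l if and only if ⦀y⦀^supp_l = ⦀y⦀^supp_d. -/

import Mathlib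

open Finset Set

namespace OSMPaper

variable {d : ℕ}

/-- Standard inner product on `ℝ^d = Fin d → ℝ`. -/
def dot (x y : Fin d → ℝ) : ℝ := ∑ i, x i * y i

/-- `N` is a norm on `ℝ^d`. -/
def IsNorm (N : (Fin d → ℝ) → ℝ) : Prop :=
  (∀ x, 0 ≤ N x) ∧ (∀ x, N x = 0 ↔ x = 0) ∧
  (∀ (c : ℝ) (x : Fin d → ℝ), N (c • x) = |c| * N x) ∧
  (∀ x y, N (x + y) ≤ N x + N y)

/-- `proj K x = x_K`, the vector coinciding with `x` on `K` and zero outside `K`. -/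
def proj (K : Finset (Fin d)) (x : Fin d → ℝ) : Fin d → ℝ :=
  fun i => if i ∈ K then x i else 0

/-- The coordinate subspace `ℝ_K`. -/
def coordSubspace (K : Finset (Fin d)) : Set (Fin d → ℝ) :=
  {x | ∀ j, j ∉ K → x j = 0}

/-- Orthant-monotonic norm. -/
def OrthantMonotonic (N : (Fin d → ℝ) → ℝ) : Prop :=
  ∀ x x' : Fin d → ℝ, (∀ i, |x i| ≤ |x' i|) → (∀ i, 0 ≤ x i * x' i) → N x ≤ N x'

/-- Orthant-strictly monotonic norm. -/
def OrthantStrictlyMonotonic (N : (Fin d → ℝ) → ℝ) : Prop :=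
  ∀ x x' : Fin d → ℝ, (∀ i, |x i| ≤ |x' i|) → (∃ j, |x j| < |x' j|) →
    (∀ i, 0 ≤ x i * x' i) → N x < N x'

/-- Dual norm `⦀y⦀⋆ = sup_{N x ≤ 1} ⟨x, y⟩`. -/
noncomputable def dualNorm (N : (Fin d → ℝ) → ℝ) (y : Fin d → ℝ) : ℝ :=
  sSup {r | ∃ x, N x ≤ 1 ∧ r = dot x y}

/-- Support function of a set `S`. -/
noncomputable def suppFn (S : Set (Fin d → ℝ)) (y : Fin d → ℝ) : ℝ :=
  sSup {r | ∃ x ∈ S, r = dot x y}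

/-- Generalized top-`k` norm associated with the source norm `N`. -/
noncomputable def topNorm (N : (Fin d → ℝ) → ℝ) (k : ℕ) (x : Fin d → ℝ) : ℝ :=
  sSup {r | ∃ K : Finset (Fin d), K.card ≤ k ∧ r = N (proj K x)}

/-- Generalized `k`-support norm: the dual norm of the generalized top-`k` norm. -/
noncomputable def supportNorm (N : (Fin d → ℝ) → ℝ) (k : ℕ) : (Fin d → ℝ) → ℝ :=
  dualNorm (topNorm N k)

/-- The ℓ0 pseudonorm: the number of nonzero components. -/
noncomputable def l0 (x : Fin d → ℝ) : ℕ := Set.ncard {i | x i ≠ 0}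

/-- `x` is an extreme point of the convex set `C`. -/
def ExtremePt (C : Set (Fin d → ℝ)) (x : Fin d → ℝ) : Prop :=
  x ∈ C ∧ ∀ y ∈ C, ∀ z ∈ C, ∀ t : ℝ, 0 < t → t < 1 →
    x = t • y + (1 - t) • z → y = x ∧ z = x

/-!
The unit ball of `⦀·⦀^supp_l` is the polar of `{x | ⦀x⦀^top_l ≤ 1} = ⋂_{|K| ≤ l} {x | ⦀x_K⦀ ≤ 1}`.
For an orthant-monotonic norm the polar of `{x | ⦀x_K⦀ ≤ 1}` is the dual unit ball cut down to
the coordinate subspace `ℝ_K` (Hahn–Banach provides the norming vectors), so by separation the unit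
ball of `⦀·⦀^supp_l` is the convex hull of the union of these pieces over `|K| ≤ l`. Orthant
monotonicity also makes `⦀·⦀^supp_l` and `⦀·⦀⋆` agree on vectors with at most `l` nonzero
entries. Conversely, if `⦀y⦀^supp_l = ⦀y⦀⋆ = 1` then `y` lies in that convex hull, and if `y` is
an extreme point of the dual unit ball it must lie in one of the pieces, i.e. `ℓ0(y) ≤ l`.
-/

lemma dot_comm (x y : Fin d → ℝ) : dot x y = dot y x := dotProduct_comm x y

lemma dot_add_right (x y z : Fin d → ℝ) : dot x (y + z) = dot x y + dot x z :=
  dotProduct_add x y z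

lemma dot_smul_left (c : ℝ) (x y : Fin d → ℝ) : dot (c • x) y = c * dot x y :=
  smul_dotProduct c x y

lemma dot_smul_right (c : ℝ) (x y : Fin d → ℝ) : dot x (c • y) = c * dot x y :=
  dotProduct_smul c x y

lemma dot_single_left (i : Fin d) (c : ℝ) (z : Fin d → ℝ) : dot (Pi.single i c) z = c * z i :=
  single_dotProduct z c i

lemma dot_self_pos {y : Fin d → ℝ} (hy : y ≠ 0) : 0 < dot y y := by
  show 0 < y ⬝ᵥ y
  simpa using Matrix.dotProduct_self_star_pos_iff.2 hy

lemma dot_proj_left (K : Finset (Fin d)) (x y : Fin d → ℝ) :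
    dot (proj K x) y = dot x (proj K y) := by
  refine Finset.sum_congr rfl fun i _ => ?_
  by_cases hi : i ∈ K <;> simp [proj, hi]

lemma linearMap_apply_eq_dot (g : (Fin d → ℝ) →ₗ[ℝ] ℝ) (w : Fin d → ℝ) :
    g w = dot (fun i => g (Pi.single i 1)) w := by
  conv_lhs => rw [pi_eq_sum_univ' w]
  simp [dot, mul_comm]

lemma proj_zero (K : Finset (Fin d)) : proj K (0 : Fin d → ℝ) = 0 := by
  ext i; simp [proj]

lemma proj_empty (x : Fin d → ℝ) : proj ∅ x = 0 := by
  ext i; simp [proj]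

lemma proj_mem_coordSubspace (K : Finset (Fin d)) (x : Fin d → ℝ) :
    proj K x ∈ coordSubspace K := fun j hj => by simp [proj, hj]

lemma proj_eq_self_of_mem_coordSubspace {K : Finset (Fin d)} {x : Fin d → ℝ}
    (hx : x ∈ coordSubspace K) : proj K x = x := by
  ext i; by_cases hi : i ∈ K <;> simp [proj, hi, hx i]

lemma convex_coordSubspace (K : Finset (Fin d)) : Convex ℝ (coordSubspace K) :=
  fun x hx y hy a b _ _ _ j hj => by simp [hx j hj, hy j hj]

lemma isClosed_coordSubspace (K : Finset (Fin d)) : IsClosed (coordSubspace K) := by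
  simp only [coordSubspace, Set.ofPred_forall]
  exact isClosed_iInter fun j => isClosed_iInter fun _ =>
    isClosed_eq (continuous_apply j) continuous_const

lemma l0_zero : l0 (0 : Fin d → ℝ) = 0 := by simp [l0]

lemma l0_le_card_of_mem_coordSubspace {K : Finset (Fin d)} {y : Fin d → ℝ}
    (hy : y ∈ coordSubspace K) : l0 y ≤ #K := by
  rw [l0, ← Set.ncard_coe_finset]
  exact Set.ncard_le_ncard fun i hi => by_contra fun hiK => hi (hy i hiK)

lemma exists_mem_coordSubspace_card_eq_l0 (y : Fin d → ℝ) :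
    ∃ K : Finset (Fin d), y ∈ coordSubspace K ∧ #K = l0 y := by
  classical
  refine ⟨univ.filter (y · ≠ 0), fun j hj => by simpa using hj, ?_⟩
  rw [l0, ← Set.ncard_coe_finset, coe_filter]
  simp

lemma l0_le (y : Fin d → ℝ) : l0 y ≤ d := by
  obtain ⟨K, -, hK⟩ := exists_mem_coordSubspace_card_eq_l0 y
  simpa [← hK] using K.card_le_univ

lemma ExtremePt.mem_extremePoints {C : Set (Fin d → ℝ)} {x : Fin d → ℝ} (h : ExtremePt C x) :
    x ∈ C.extremePoints ℝ := by
  refine ⟨h.1, fun y hy z hz hx => ?_⟩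
  obtain ⟨a, b, ha, hb, hab, rfl⟩ := hx
  obtain rfl : b = 1 - a := by linarith
  exact (h.2 y hy z hz a ha (by linarith) rfl).1

theorem isCompact_convexJoin {E : Type*} [AddCommGroup E] [Module ℝ E] [TopologicalSpace E]
    [ContinuousAdd E] [ContinuousSMul ℝ E] {s t : Set E} (hs : IsCompact s) (ht : IsCompact t) :
    IsCompact (convexJoin ℝ s t) := by
  have h : convexJoin ℝ s t =
      (fun q : ℝ × E × E => (1 - q.1) • q.2.1 + q.1 • q.2.2) '' (Set.Icc 0 1 ×ˢ s ×ˢ t) := by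
    ext x
    simp only [mem_convexJoin, segment_eq_image, Set.mem_image, Set.mem_prod, Prod.exists]
    aesop
  rw [h]
  exact (isCompact_Icc.prod (hs.prod ht)).image (by fun_prop)

theorem isCompact_convexHull_biUnion {ι E : Type*} [AddCommGroup E] [Module ℝ E]
    [TopologicalSpace E] [ContinuousAdd E] [ContinuousSMul ℝ E]
    (F : Finset ι) {s : ι → Set E} (hs : ∀ i ∈ F, IsCompact (convexHull ℝ (s i))) :
    IsCompact (convexHull ℝ (⋃ i ∈ F, s i)) := by
  classical
  induction F using Finset.induction_on with
  | empty => simp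
  | insert a F _ ih =>
    rw [Finset.set_biUnion_insert]
    have hrest := ih fun i hi => hs i (mem_insert_of_mem hi)
    have ha := hs a (mem_insert_self a F)
    rcases (s a).eq_empty_or_nonempty with h | h
    · simpa [h] using hrest
    rcases (⋃ i ∈ F, s i).eq_empty_or_nonempty with h' | h'
    · simpa [h'] using ha
    rw [convexHull_union h h']
    exact isCompact_convexJoin ha hrest

lemma exists_dot_lt_one_lt_dot {S : Set (Fin d → ℝ)} (hconv : Convex ℝ S) (hclosed : IsClosed S)
    (h0 : 0 ∈ S) {p : Fin d → ℝ} (hp : p ∉ S) :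
    ∃ x, (∀ a ∈ S, dot x a < 1) ∧ 1 < dot x p := by
  obtain ⟨f, u, hfS, hfp⟩ := geometric_hahn_banach_closed_point hconv hclosed hp
  have hu : 0 < u := by simpa using hfS 0 h0
  let g : (Fin d → ℝ) →ₗ[ℝ] ℝ := u⁻¹ • f.toLinearMap
  have hg (a : Fin d → ℝ) : g a = u⁻¹ * f a := rfl
  refine ⟨fun i => g (Pi.single i 1), fun a ha => ?_, ?_⟩
  · rw [← linearMap_apply_eq_dot, hg, inv_mul_lt_one₀ hu]
    exact hfS a ha
  · rw [← linearMap_apply_eq_dot, hg, one_lt_inv_mul₀ hu]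
    exact hfp

section DualNorm

variable {N : (Fin d → ℝ) → ℝ}

lemma IsNorm.map_zero (hN : IsNorm N) : N 0 = 0 := (hN.2.1 0).2 rfl

lemma IsNorm.pos (hN : IsNorm N) {x : Fin d → ℝ} (hx : x ≠ 0) : 0 < N x :=
  lt_of_le_of_ne (hN.1 x) fun h => hx ((hN.2.1 x).1 h.symm)

lemma OrthantMonotonic.norm_proj_le (hom : OrthantMonotonic N) (K : Finset (Fin d))
    (x : Fin d → ℝ) : N (proj K x) ≤ N x :=
  hom _ _ (fun i => by by_cases hi : i ∈ K <;> simp [proj, hi])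
    (fun i => by by_cases hi : i ∈ K <;> simp [proj, hi, mul_self_nonneg])

lemma norm_proj_le_topNorm {k : ℕ} {K : Finset (Fin d)} (hK : #K ≤ k) (x : Fin d → ℝ) :
    N (proj K x) ≤ topNorm N k x := by
  refine le_csSup ((Set.finite_range fun K => N (proj K x)).subset ?_).bddAbove ⟨K, hK, rfl⟩
  rintro _ ⟨K, -, rfl⟩
  exact ⟨K, rfl⟩

lemma topNorm_le {k : ℕ} {x : Fin d → ℝ} {c : ℝ}
    (h : ∀ K : Finset (Fin d), #K ≤ k → N (proj K x) ≤ c) : topNorm N k x ≤ c :=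
  csSup_le ⟨_, ∅, by simp, rfl⟩ (by rintro _ ⟨K, hK, rfl⟩; exact h K hK)

lemma topNorm_le_norm (hom : OrthantMonotonic N) (k : ℕ) (x : Fin d → ℝ) :
    topNorm N k x ≤ N x :=
  topNorm_le fun K _ => hom.norm_proj_le K x

lemma topNorm_mono {k l : ℕ} (hkl : k ≤ l) (x : Fin d → ℝ) :
    topNorm N k x ≤ topNorm N l x :=
  topNorm_le fun _ hK => norm_proj_le_topNorm (hK.trans hkl) x

lemma topNorm_zero_apply_le_one (hN : IsNorm N) (x : Fin d → ℝ) : topNorm N 0 x ≤ 1 :=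
  topNorm_le fun K hK => by
    rw [Finset.card_eq_zero.1 (Nat.le_zero.1 hK), proj_empty, hN.map_zero]
    exact zero_le_one

lemma bddAbove_dualSet (hN : IsNorm N) {M : (Fin d → ℝ) → ℝ}
    (hM : ∀ x i, N (proj {i} x) ≤ M x) (y : Fin d → ℝ) :
    BddAbove {r | ∃ x, M x ≤ 1 ∧ r = dot x y} := by
  refine ⟨∑ i, |y i| / N (Pi.single i 1), ?_⟩
  rintro _ ⟨x, hx, rfl⟩
  refine Finset.sum_le_sum fun i _ => ?_
  have hei : 0 < N (Pi.single i 1) := hN.pos (by simp)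
  have hproj : proj {i} x = x i • Pi.single i 1 := by
    ext j; by_cases hj : j = i <;> simp [proj, hj]
  have hxi : |x i| * N (Pi.single i 1) ≤ 1 := by
    rw [← hN.2.2.1, ← hproj]; exact (hM x i).trans hx
  calc x i * y i ≤ |x i| * |y i| := by rw [← abs_mul]; exact le_abs_self _
    _ ≤ |y i| / N (Pi.single i 1) := by
      rw [le_div_iff₀ hei, mul_right_comm]
      exact mul_le_of_le_one_left (abs_nonneg _) hxi

lemma dualNorm_smul (M : (Fin d → ℝ) → ℝ) {c : ℝ} (hc : 0 ≤ c) (y : Fin d → ℝ) :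
    dualNorm M (c • y) = c * dualNorm M y := by
  rw [dualNorm, dualNorm, ← smul_eq_mul, ← Real.sSup_smul_of_nonneg hc]
  congr 1
  ext r
  simp [Set.mem_smul_set, dot_smul_right, eq_comm]

lemma dualNorm_le (hN : IsNorm N) {y : Fin d → ℝ} {c : ℝ}
    (h : ∀ x, N x ≤ 1 → dot x y ≤ c) : dualNorm N y ≤ c :=
  csSup_le ⟨_, 0, by simp [hN.map_zero], rfl⟩ (by rintro _ ⟨x, hx, rfl⟩; exact h x hx)

lemma exists_dualNorm_le_one_dot_eq (hN : IsNorm N) (v : Fin d → ℝ) :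
    ∃ z, dualNorm N z ≤ 1 ∧ dot v z = N v := by
  rcases eq_or_ne v 0 with rfl | hv
  · exact ⟨0, dualNorm_le hN fun x _ => by simp [dot], by simp [dot, hN.map_zero]⟩
  let f : (Fin d → ℝ) →ₗ.[ℝ] ℝ := LinearPMap.mkSpanSingleton v (N v) hv
  have hfN (u : f.domain) : f u ≤ N u := by
    obtain ⟨u, hu⟩ := u
    obtain ⟨t, rfl⟩ := Submodule.mem_span_singleton.1 hu
    rw [LinearPMap.mkSpanSingleton'_apply, RingHom.id_apply, smul_eq_mul, hN.2.2.1]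
    exact mul_le_mul_of_nonneg_right (le_abs_self t) (hN.1 v)
  obtain ⟨g, hgf, hgN⟩ := exists_extension_of_le_sublinear f N
    (fun c hc x => by rw [hN.2.2.1, abs_of_pos hc]) hN.2.2.2 hfN
  refine ⟨fun i => g (Pi.single i 1), dualNorm_le hN fun x hx => ?_, ?_⟩
  · rw [dot_comm, ← linearMap_apply_eq_dot]
    exact (hgN x).trans hx
  · rw [dot_comm, ← linearMap_apply_eq_dot, hgf ⟨v, Submodule.mem_span_singleton_self v⟩]
    exact LinearPMap.mkSpanSingleton_apply ℝ ℝ hv (N v)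

variable (hN : IsNorm N) (hom : OrthantMonotonic N)
include hN hom

lemma dot_le_dualNorm {x y : Fin d → ℝ} (hx : N x ≤ 1) : dot x y ≤ dualNorm N y :=
  le_csSup (bddAbove_dualSet hN (fun x i => hom.norm_proj_le {i} x) y) ⟨x, hx, rfl⟩

lemma dot_le_norm_mul_dualNorm (x y : Fin d → ℝ) : dot x y ≤ N x * dualNorm N y := by
  rcases eq_or_ne x 0 with rfl | hx
  · simp [hN.map_zero, dot]
  have hpos := hN.pos hx
  have hunit : N ((N x)⁻¹ • x) ≤ 1 := by
    rw [hN.2.2.1, abs_of_pos (inv_pos.2 hpos), inv_mul_cancel₀ hpos.ne']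
  calc dot x y = N x * dot ((N x)⁻¹ • x) y := by
        rw [dot_smul_left, ← mul_assoc, mul_inv_cancel₀ hpos.ne', one_mul]
    _ ≤ N x * dualNorm N y := mul_le_mul_of_nonneg_left (dot_le_dualNorm hN hom hunit) hpos.le

lemma dualNorm_pos {y : Fin d → ℝ} (hy : y ≠ 0) : 0 < dualNorm N y :=
  (mul_pos_iff_of_pos_left (hN.pos hy)).1 <|
    (dot_self_pos hy).trans_le (dot_le_norm_mul_dualNorm hN hom y y)

lemma dualNorm_proj_le (K : Finset (Fin d)) (z : Fin d → ℝ) :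
    dualNorm N (proj K z) ≤ dualNorm N z :=
  dualNorm_le hN fun x hx => by
    rw [← dot_proj_left]
    exact dot_le_dualNorm hN hom ((hom.norm_proj_le K x).trans hx)

lemma exists_mem_dualBall_inter_coordSubspace_dot_eq (x : Fin d → ℝ) (K : Finset (Fin d)) :
    ∃ z ∈ {z | dualNorm N z ≤ 1} ∩ coordSubspace K, dot x z = N (proj K x) := by
  obtain ⟨z, hz, hzx⟩ := exists_dualNorm_le_one_dot_eq hN (proj K x)
  exact ⟨proj K z, ⟨(dualNorm_proj_le hN hom K z).trans hz, proj_mem_coordSubspace K z⟩,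
    by rw [← dot_proj_left, hzx]⟩

lemma convex_dualBall : Convex ℝ {z : Fin d → ℝ | dualNorm N z ≤ 1} := by
  intro z₁ hz₁ z₂ hz₂ a b ha hb hab
  refine dualNorm_le hN fun x hx => ?_
  rw [dot_add_right, dot_smul_right, dot_smul_right, ← hab]
  exact add_le_add (mul_le_of_le_one_right ha ((dot_le_dualNorm hN hom hx).trans hz₁))
    (mul_le_of_le_one_right hb ((dot_le_dualNorm hN hom hx).trans hz₂))

lemma isClosed_dualBall : IsClosed {z : Fin d → ℝ | dualNorm N z ≤ 1} := by
  have h : {z : Fin d → ℝ | dualNorm N z ≤ 1} = ⋂ x ∈ {x | N x ≤ 1}, {z | dot x z ≤ 1} := by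
    ext z
    simp only [Set.mem_ofPred_eq, Set.mem_iInter]
    exact ⟨fun hz x hx => (dot_le_dualNorm hN hom hx).trans hz, dualNorm_le hN⟩
  rw [h]
  exact isClosed_biInter fun x _ =>
    isClosed_le (continuous_const.dotProduct continuous_id) continuous_const

lemma abs_apply_le_of_dualNorm_le_one {z : Fin d → ℝ} (hz : dualNorm N z ≤ 1) (i : Fin d) :
    |z i| ≤ N (Pi.single i 1) := by
  have hbound (c : ℝ) (hc : |c| = 1) : c * z i ≤ N (Pi.single i 1) := by
    have hsingle : N (Pi.single i c) = N (Pi.single i 1) := by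
      rw [← mul_one c, ← smul_eq_mul, Pi.single_smul', hN.2.2.1, hc, one_mul]
    have h := dot_le_norm_mul_dualNorm hN hom (Pi.single i c) z
    rw [dot_single_left, hsingle] at h
    exact h.trans (mul_le_of_le_one_right (hN.1 _) hz)
  exact abs_le'.2 ⟨by simpa using hbound 1 (by simp), by simpa using hbound (-1) (by simp)⟩

lemma isCompact_dualBall : IsCompact {z : Fin d → ℝ | dualNorm N z ≤ 1} := by
  refine Metric.isCompact_of_isClosed_isBounded (isClosed_dualBall hN hom)
    ((Metric.isBounded_iff_subset_closedBall 0).2 ⟨∑ i, N (Pi.single i 1), fun z hz => ?_⟩)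
  rw [Metric.mem_closedBall, dist_zero_right,
    pi_norm_le_iff_of_nonneg (Finset.sum_nonneg fun i _ => hN.1 _)]
  exact fun i => (abs_apply_le_of_dualNorm_le_one hN hom hz i).trans
    (Finset.single_le_sum (f := fun j => N (Pi.single j 1)) (fun j _ => hN.1 _) (mem_univ i))

end DualNorm

section SupportNorm

variable {N : (Fin d → ℝ) → ℝ}

lemma bddAbove_supportNormSet (hN : IsNorm N) {k : ℕ} (hk : 1 ≤ k) (y : Fin d → ℝ) :
    BddAbove {r | ∃ x, topNorm N k x ≤ 1 ∧ r = dot x y} :=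
  bddAbove_dualSet hN (fun x _ => norm_proj_le_topNorm (by simpa using hk) x) y

lemma supportNorm_le_supportNorm (hN : IsNorm N) {k l : ℕ} (hk : 1 ≤ k) (hkl : k ≤ l)
    (y : Fin d → ℝ) : supportNorm N l y ≤ supportNorm N k y := by
  refine csSup_le_csSup (bddAbove_supportNormSet hN hk y) ⟨0, 0, ?_, by simp [dot]⟩ ?_
  · exact topNorm_le fun K _ => by rw [proj_zero, hN.map_zero]; exact zero_le_one
  · rintro _ ⟨x, hx, rfl⟩
    exact ⟨x, (topNorm_mono hkl x).trans hx, rfl⟩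

lemma supportNorm_eq_dualNorm_of_l0_le (hom : OrthantMonotonic N) {y : Fin d → ℝ} {l : ℕ}
    (hl : l0 y ≤ l) : supportNorm N l y = dualNorm N y := by
  obtain ⟨K, hyK, hK⟩ := exists_mem_coordSubspace_card_eq_l0 y
  unfold supportNorm dualNorm
  congr 1
  ext r
  constructor
  · rintro ⟨x, hx, rfl⟩
    exact ⟨proj K x, (norm_proj_le_topNorm (hK ▸ hl) x).trans hx,
      by rw [dot_proj_left, proj_eq_self_of_mem_coordSubspace hyK]⟩
  · rintro ⟨x, hx, rfl⟩
    exact ⟨x, (topNorm_le_norm hom l x).trans hx, rfl⟩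

/-- A junk value: the defining set is all of `ℝ`, and `sSup` of an unbounded set is `0`. -/
lemma supportNorm_zero_apply (hN : IsNorm N) {y : Fin d → ℝ} (hy : y ≠ 0) :
    supportNorm N 0 y = 0 := by
  refine Real.sSup_of_not_bddAbove fun ⟨b, hb⟩ => ?_
  have hmem : (b + 1) / dot y y * dot y y ∈ {r | ∃ x, topNorm N 0 x ≤ 1 ∧ r = dot x y} :=
    ⟨((b + 1) / dot y y) • y, topNorm_zero_apply_le_one hN _, (dot_smul_left _ _ _).symm⟩
  have := hb hmem
  rw [div_mul_cancel₀ _ (dot_self_pos hy).ne'] at this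
  linarith

variable (hN : IsNorm N) (hom : OrthantMonotonic N)
include hN hom

lemma mem_convexHull_of_supportNorm_le_one {l : ℕ} (hl : 1 ≤ l) {p : Fin d → ℝ}
    (hp : supportNorm N l p ≤ 1) :
    p ∈ convexHull ℝ (⋃ K ∈ univ.filter (fun K : Finset (Fin d) => #K ≤ l),
      {z | dualNorm N z ≤ 1} ∩ coordSubspace K) := by
  set U := ⋃ K ∈ univ.filter (fun K : Finset (Fin d) => #K ≤ l),
    {z | dualNorm N z ≤ 1} ∩ coordSubspace K
  have hU {K : Finset (Fin d)} (hK : #K ≤ l) :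
      {z | dualNorm N z ≤ 1} ∩ coordSubspace K ⊆ convexHull ℝ U := fun z hz =>
    subset_convexHull ℝ U (Set.mem_biUnion (by simpa using hK) hz)
  have hcompact : IsCompact (convexHull ℝ U) := by
    refine isCompact_convexHull_biUnion _ fun K _ => ?_
    rw [((convex_dualBall hN hom).inter (convex_coordSubspace K)).convexHull_eq]
    exact (isCompact_dualBall hN hom).inter_right (isClosed_coordSubspace K)
  have h0 : (0 : Fin d → ℝ) ∈ convexHull ℝ U :=
    hU (K := ∅) (by simp) ⟨dualNorm_le hN fun x _ => by simp [dot], fun _ _ => rfl⟩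
  by_contra hpU
  obtain ⟨x, hxU, hxp⟩ :=
    exists_dot_lt_one_lt_dot (convex_convexHull ℝ U) hcompact.isClosed h0 hpU
  have htop : topNorm N l x ≤ 1 := topNorm_le fun K hK => by
    obtain ⟨z, hz, hxz⟩ := exists_mem_dualBall_inter_coordSubspace_dot_eq hN hom x K
    exact hxz ▸ (hxU z (hU hK hz)).le
  have := le_csSup (bddAbove_supportNormSet hN hl p) ⟨x, htop, rfl⟩
  exact (this.trans hp).not_gt hxp

lemma l0_le_of_supportNorm_eq_dualNorm
    (hext : ∀ y : Fin d → ℝ, dualNorm N y = 1 → ExtremePt {z | dualNorm N z ≤ 1} y)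
    {l : ℕ} (hl : 1 ≤ l) {y : Fin d → ℝ} (hy : y ≠ 0) (h : supportNorm N l y = dualNorm N y) :
    l0 y ≤ l := by
  set s := dualNorm N y
  have hs : 0 < s := dualNorm_pos hN hom hy
  have hp : dualNorm N (s⁻¹ • y) = 1 := by
    rw [dualNorm_smul _ (inv_nonneg.2 hs.le), inv_mul_cancel₀ hs.ne']
  have hpU := mem_convexHull_of_supportNorm_le_one hN hom hl (p := s⁻¹ • y) <| by
    rw [supportNorm, dualNorm_smul _ (inv_nonneg.2 hs.le), ← supportNorm, h,
      inv_mul_cancel₀ hs.ne']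
  have hpext := inter_extremePoints_subset_extremePoints_of_subset
    (convexHull_min (Set.iUnion₂_subset fun _ _ => Set.inter_subset_left) (convex_dualBall hN hom))
    ⟨hpU, (hext _ hp).mem_extremePoints⟩
  obtain ⟨-, K, hK, hpK⟩ : dualNorm N (s⁻¹ • y) ≤ 1 ∧
      ∃ K : Finset (Fin d), #K ≤ l ∧ s⁻¹ • y ∈ coordSubspace K := by
    simpa using extremePoints_convexHull_subset hpext
  have hyK : y ∈ coordSubspace K := fun j hj =>
    (mul_eq_zero.1 (hpK j hj)).resolve_left (inv_ne_zero hs.ne')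
  exact (l0_le_card_of_mem_coordSubspace hyK).trans hK

end SupportNorm

theorem supportNorm_decreasingly_graded_of_orthantMonotonic_general
    (N : (Fin d → ℝ) → ℝ) (hN : IsNorm N)
    (hom : OrthantMonotonic N) :
    ((∀ (y : Fin d → ℝ) (k l : ℕ), 1 ≤ k → k ≤ l → l ≤ d →
        supportNorm N l y ≤ supportNorm N k y) ∧
      (∀ (y : Fin d → ℝ) (l : ℕ), l ≤ d → l0 y ≤ l →
        supportNorm N l y = supportNorm N d y ∧
        supportNorm N d y = dualNorm N y)) ∧
    ((∀ y : Fin d → ℝ, dualNorm N y = 1 →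
        ExtremePt {z | dualNorm N z ≤ 1} y) →
      ∀ (y : Fin d → ℝ) (l : ℕ), l ≤ d →
        (l0 y ≤ l ↔ supportNorm N l y = supportNorm N d y)) := by
  have hfull (y : Fin d → ℝ) : supportNorm N d y = dualNorm N y :=
    supportNorm_eq_dualNorm_of_l0_le hom (l0_le y)
  have hgraded {y : Fin d → ℝ} {l : ℕ} (hly : l0 y ≤ l) : supportNorm N l y = supportNorm N d y :=
    (supportNorm_eq_dualNorm_of_l0_le hom hly).trans (hfull y).symm
  refine ⟨⟨fun y k l hk hkl _ => supportNorm_le_supportNorm hN hk hkl y,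
    fun y l _ hly => ⟨hgraded hly, hfull y⟩⟩, fun hext y l _ => ⟨hgraded, fun h => ?_⟩⟩
  rcases eq_or_ne y 0 with rfl | hy
  · simp [l0_zero]
  rcases Nat.eq_zero_or_pos l with rfl | hl
  · have := dualNorm_pos hN hom hy
    rw [supportNorm_zero_apply hN hy, hfull] at h
    linarith
  · exact l0_le_of_supportNorm_eq_dualNorm hN hom hext hl hy (h.trans (hfull y))

/-- for an orthant-monotonic source norm, the sequence of
generalized k-support norms is nonincreasing and decreasingly graded w.r.t. the
ℓ0 pseudonorm; if moreover the dual normed space is strictly convex, the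
sequence is strictly decreasingly graded. -/
theorem supportNorm_decreasingly_graded_of_orthantMonotonic
    (hd : 0 < d) (N : (Fin d → ℝ) → ℝ) (hN : IsNorm N)
    (hom : OrthantMonotonic N) :
    ((∀ (y : Fin d → ℝ) (k l : ℕ), 1 ≤ k → k ≤ l → l ≤ d →
        supportNorm N l y ≤ supportNorm N k y) ∧
      (∀ (y : Fin d → ℝ) (l : ℕ), l ≤ d → l0 y ≤ l →
        supportNorm N l y = supportNorm N d y ∧
        supportNorm N d y = dualNorm N y)) ∧
    ((∀ y : Fin d → ℝ, dualNorm N y = 1 →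
        ExtremePt {z | dualNorm N z ≤ 1} y) →
      ∀ (y : Fin d → ℝ) (l : ℕ), l ≤ d →
        (l0 y ≤ l ↔ supportNorm N l y = supportNorm N d y)) :=
  supportNorm_decreasingly_graded_of_orthantMonotonic_general N hN hom

end OSMPaper
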